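/- arXiv:1802.06551 — 2 statements merged into one kernel-verified Lean document; each statement's English description precedes it below -/
import Mathlib

section
/- Soundness of the n-way product construction: let S1, ..., Sn be statements over pairwise disjoint sets of variables, and suppose ⊢ S1 ⊛ ... ⊛ Sn ⇝ S is derivable by the product-construction inference system. Then for all valuations σ and σ', σ ⊢ S1; ...; Sn ⇓ σ' if and only if σ ⊢ S ⇓ σ'. -/
namespace ProgMerge

/-! ## A simple imperative language with arrays and holes -/

/-- Program variables. -/
abbrev Var := String

/-- Values: `none` is the distinguished uninitialized value `⊥`. -/
abbrev Val := Option Int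

/-- A valuation maps (variable, index) pairs to values; reads of
uninitialized locations yield `⊥` (i.e. `none`). -/
abbrev Valuation := Var → Int → Val

/-- Expressions. -/
inductive Expr where
  | const : Int → Expr
  | var : Var → Expr
  | arr : Var → Expr → Expr
  | add : Expr → Expr → Expr

/-- Expression evaluation. -/
def Expr.eval (σ : Valuation) : Expr → Val
  | .const n => some n
  | .var x => σ x 0
  | .arr x e =>
      match e.eval σ with
      | some i => σ x i
      | none => none
  | .add e₁ e₂ =>
      match e₁.eval σ, e₂.eval σ with
      | some a, some b => some (a + b)
      | _, _ => none

/-- Variables mentioned by an expression. -/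
def Expr.vars : Expr → Set Var
  | .const _ => ∅
  | .var x => {x}
  | .arr x e => {x} ∪ e.vars
  | .add e₁ e₂ => e₁.vars ∪ e₂.vars

/-- Boolean conditions. -/
inductive Cond where
  | eq : Expr → Expr → Cond
  | not : Cond → Cond
  | and : Cond → Cond → Cond

/-- Condition evaluation. -/
def Cond.eval (σ : Valuation) : Cond → Bool
  | .eq e₁ e₂ => decide (e₁.eval σ = e₂.eval σ)
  | .not c => !(c.eval σ)
  | .and c₁ c₂ => c₁.eval σ && c₂.eval σ

/-- Variables mentioned by a condition. -/
def Cond.vars : Cond → Set Var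
  | .eq e₁ e₂ => e₁.vars ∪ e₂.vars
  | .not c => c.vars
  | .and c₁ c₂ => c₁.vars ∪ c₂.vars

/-- Statements, possibly containing holes `??` (constructor `hole`).
Hole-free statements are the statements of the base language. -/
inductive Stmt where
  | hole : Stmt
  | skip : Stmt
  | assign : Var → Expr → Stmt
  | arrAssign : Var → Expr → Expr → Stmt
  | seq : Stmt → Stmt → Stmt
  | ifte : Cond → Stmt → Stmt → Stmt
  | whileDo : Cond → Stmt → Stmt

instance : Inhabited Stmt := ⟨.skip⟩

/-- Variables mentioned by a statement (including its conditions and expressions). -/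
def Stmt.vars : Stmt → Set Var
  | .hole => ∅
  | .skip => ∅
  | .assign x e => {x} ∪ e.vars
  | .arrAssign x e₁ e₂ => {x} ∪ e₁.vars ∪ e₂.vars
  | .seq s₁ s₂ => s₁.vars ∪ s₂.vars
  | .ifte c s₁ s₂ => c.vars ∪ s₁.vars ∪ s₂.vars
  | .whileDo c s => c.vars ∪ s.vars

/-- Number of holes in a statement. -/
def Stmt.numHoles : Stmt → ℕ
  | .hole => 1
  | .skip => 0
  | .assign _ _ => 0
  | .arrAssign _ _ _ => 0
  | .seq s₁ s₂ => s₁.numHoles + s₂.numHoles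
  | .ifte _ s₁ s₂ => s₁.numHoles + s₂.numHoles
  | .whileDo _ s => s.numHoles

/-- A statement is hole-free if it contains no holes. -/
def Stmt.HoleFree (s : Stmt) : Prop := s.numHoles = 0

/-- Updating a valuation at a (variable, index) location. -/
def Valuation.update (σ : Valuation) (x : Var) (i : Int) (v : Val) : Valuation :=
  fun y j => if y = x ∧ j = i then v else σ y j

/-- Standard big-step operational semantics `σ ⊢ S ⇓ σ'`.
There is no rule for holes. -/
inductive BigStep : Stmt → Valuation → Valuation → Prop where
  | skip {σ} : BigStep .skip σ σ
  | assign {x e σ} : BigStep (.assign x e) σ (σ.update x 0 (e.eval σ))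
  | arrAssign {x e₁ e₂ σ i} : e₁.eval σ = some i →
      BigStep (.arrAssign x e₁ e₂) σ (σ.update x i (e₂.eval σ))
  | seq {s₁ s₂ σ σ₁ σ₂} : BigStep s₁ σ σ₁ → BigStep s₂ σ₁ σ₂ →
      BigStep (.seq s₁ s₂) σ σ₂
  | ifteTrue {c s₁ s₂ σ σ'} : c.eval σ = true → BigStep s₁ σ σ' →
      BigStep (.ifte c s₁ s₂) σ σ'
  | ifteFalse {c s₁ s₂ σ σ'} : c.eval σ = false → BigStep s₂ σ σ' →
      BigStep (.ifte c s₁ s₂) σ σ'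
  | whileFalse {c s σ} : c.eval σ = false → BigStep (.whileDo c s) σ σ
  | whileTrue {c s σ σ₁ σ₂} : c.eval σ = true → BigStep s σ σ₁ →
      BigStep (.whileDo c s) σ₁ σ₂ → BigStep (.whileDo c s) σ σ₂

/-- `Apply`: fill the holes of a statement with the successive entries of an
edit, in depth-first left-to-right order, returning the filled statement
together with the unconsumed remainder of the edit. -/
def Stmt.applyAux : Stmt → List Stmt → Stmt × List Stmt
  | .hole, s :: Δ => (s, Δ)
  | .hole, [] => (.hole, [])
  | .skip, Δ => (.skip, Δ)
  | .assign x e, Δ => (.assign x e, Δ)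
  | .arrAssign x e₁ e₂, Δ => (.arrAssign x e₁ e₂, Δ)
  | .seq s₁ s₂, Δ =>
      match s₁.applyAux Δ with
      | (t₁, Δ₁) =>
        match s₂.applyAux Δ₁ with
        | (t₂, Δ₂) => (.seq t₁ t₂, Δ₂)
  | .ifte c s₁ s₂, Δ =>
      match s₁.applyAux Δ with
      | (t₁, Δ₁) =>
        match s₂.applyAux Δ₁ with
        | (t₂, Δ₂) => (.ifte c t₁ t₂, Δ₂)
  | .whileDo c s, Δ =>
      match s.applyAux Δ with
      | (t, Δ') => (.whileDo c t, Δ')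

/-- Edit application `Ŝ[Δ]`. -/
def Stmt.applyEdit (s : Stmt) (Δ : List Stmt) : Stmt := (s.applyAux Δ).1

/-- Total number of holes occurring in the entries of a (generalized) edit. -/
def editNumHoles (Δ : List Stmt) : ℕ := (Δ.map Stmt.numHoles).sum

/-- Sequential composition `S₁; ...; Sₙ` of a list of statements. -/
def seqAll (P : List Stmt) : Stmt := P.foldr Stmt.seq .skip

/-- Atomic statements. -/
def Stmt.Atomic : Stmt → Prop
  | .skip => True
  | .assign _ _ => True
  | .arrAssign _ _ _ => True
  | _ => False

/-- A program starts with a while loop. -/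
def Stmt.startsWithLoop : Stmt → Prop
  | .whileDo _ _ => True
  | .seq s₁ _ => s₁.startsWithLoop
  | _ => False

/-- The n-way product construction inference system `⊢ S₁ ⊛ ... ⊛ Sₙ ⇝ S`.
The base rule is `⊢ S ⇝ S`, and `skip ⊛ 𝔓` is identified with `𝔓`
(constructor `skipElim`). -/
inductive Product : List Stmt → Stmt → Prop where
  /-- Base rule `⊢ S ⇝ S`. -/
  | base {S : Stmt} : Product [S] S
  /-- Identification of `skip ⊛ 𝔓` with `𝔓`. -/
  | skipElim {P : List Stmt} {S : Stmt} : Product P S → Product (Stmt.skip :: P) S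
  /-- Rule (1): atomic head. -/
  | atom {A S₁ S : Stmt} {P : List Stmt} : A.Atomic →
      Product (S₁ :: P) S →
      Product (Stmt.seq A S₁ :: P) (Stmt.seq A S)
  /-- Rule (2): conditional head. -/
  | iteRule {c : Cond} {St Se S₁ S' S'' : Stmt} {P : List Stmt} :
      Product (Stmt.seq St S₁ :: P) S' →
      Product (Stmt.seq Se S₁ :: P) S'' →
      Product (Stmt.seq (Stmt.ifte c St Se) S₁ :: P) (Stmt.ifte c S' S'')
  /-- Rule (3): the first program starts with a loop but some other
  program `Sᵢ ∈ 𝔓` does not; move `Sᵢ` to the front and the loop-headed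
  program to the back. -/
  | loopSwap {c₁ : Cond} {SB₁ S₁ Sᵢ S : Stmt} {P₁ P₂ : List Stmt} :
      ¬ Sᵢ.startsWithLoop →
      Product (Sᵢ :: (P₁ ++ P₂ ++ [Stmt.seq (Stmt.whileDo c₁ SB₁) S₁])) S →
      Product (Stmt.seq (Stmt.whileDo c₁ SB₁) S₁ :: (P₁ ++ Sᵢ :: P₂)) S
  /-- Rule (4): all programs start with a while loop; pick a nonempty
  subset `H` (each element decomposed as a leading loop and its
  continuation), take the product `S'` of the leading loops of `H` and the
  product `S''` of the continuations of `H` together with the remaining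
  programs `R`. -/
  | split {H : List (Cond × Stmt × Stmt)} {R P : List Stmt} {S' S'' : Stmt} :
      H ≠ [] →
      (∀ s ∈ R, s.startsWithLoop) →
      List.Perm P ((H.map fun h => Stmt.seq (Stmt.whileDo h.1 h.2.1) h.2.2) ++ R) →
      Product (H.map fun h => Stmt.whileDo h.1 h.2.1) S' →
      Product ((H.map fun h => h.2.2) ++ R) S'' →
      Product P (Stmt.seq S' S'')
  /-- Rule (5): synchronize the two leading loops, executing them in
  lockstep via `W` and finishing the remaining iterations via `R`. -/
  | sync {c₁ c₂ : Cond} {SB₁ SB₂ S S' : Stmt} {P : List Stmt} :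
      Product [SB₁, SB₂] S →
      Product (Stmt.seq (Stmt.whileDo (c₁.and c₂) S)
          (Stmt.ifte c₁ (Stmt.whileDo c₁ SB₁)
            (Stmt.ifte c₂ (Stmt.whileDo c₂ SB₂) Stmt.skip)) :: P) S' →
      Product (Stmt.whileDo c₁ SB₁ :: Stmt.whileDo c₂ SB₂ :: P) S'

/-! ## Auxiliary development -/

open Classical in
/-- Merge two valuations: take `σ` on locations whose variable lies in `V`,
and `τ` elsewhere. -/
noncomputable def merge (V : Set Var) (σ τ : Valuation) : Valuation :=
  fun x i => if x ∈ V then σ x i else τ x i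

theorem merge_mem {V : Set Var} {σ τ : Valuation} {x : Var} (h : x ∈ V) (i : Int) :
    merge V σ τ x i = σ x i := by simp [merge, h]

theorem merge_not_mem {V : Set Var} {σ τ : Valuation} {x : Var} (h : x ∉ V) (i : Int) :
    merge V σ τ x i = τ x i := by simp [merge, h]

theorem Expr.eval_congr {σ τ : Valuation} :
    ∀ e : Expr, (∀ x ∈ e.vars, ∀ i, σ x i = τ x i) → e.eval σ = e.eval τ
  | .const _, _ => rfl
  | .var x, h => h x (by simp [Expr.vars]) 0
  | .arr x e, h => by
      have he := Expr.eval_congr e fun y hy i => h y (by simp [Expr.vars, hy]) i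
      simp only [Expr.eval, he]
      cases e.eval τ with
      | none => rfl
      | some i => exact h x (by simp [Expr.vars]) i
  | .add e₁ e₂, h => by
      have h₁ := Expr.eval_congr e₁ fun y hy i => h y (by simp [Expr.vars, hy]) i
      have h₂ := Expr.eval_congr e₂ fun y hy i => h y (by simp [Expr.vars, hy]) i
      simp only [Expr.eval, h₁, h₂]

theorem Cond.eval_congr {σ τ : Valuation} :
    ∀ c : Cond, (∀ x ∈ c.vars, ∀ i, σ x i = τ x i) → c.eval σ = c.eval τ
  | .eq e₁ e₂, h => by
      have h₁ := Expr.eval_congr e₁ fun y hy i => h y (by simp [Cond.vars, hy]) i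
      have h₂ := Expr.eval_congr e₂ fun y hy i => h y (by simp [Cond.vars, hy]) i
      simp only [Cond.eval, h₁, h₂]
  | .not c, h => by
      have hc := Cond.eval_congr c fun y hy i => h y (by simp [Cond.vars, hy]) i
      simp only [Cond.eval, hc]
  | .and c₁ c₂, h => by
      have h₁ := Cond.eval_congr c₁ fun y hy i => h y (by simp [Cond.vars, hy]) i
      have h₂ := Cond.eval_congr c₂ fun y hy i => h y (by simp [Cond.vars, hy]) i
      simp only [Cond.eval, h₁, h₂]

/-- A statement only writes to its own variables. -/
theorem BigStep.writes {s : Stmt} {σ σ' : Valuation} (h : BigStep s σ σ') :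
    ∀ x ∉ s.vars, ∀ i, σ' x i = σ x i := by
  induction h with
  | skip => intro x _ i; rfl
  | @assign y e σ =>
      intro x hx i
      have hxy : x ≠ y := fun hxy => hx (by simp [Stmt.vars, hxy])
      simp [Valuation.update, hxy]
  | @arrAssign y e₁ e₂ σ j hj =>
      intro x hx i
      have hxy : x ≠ y := fun hxy => hx (by simp [Stmt.vars, hxy])
      simp [Valuation.update, hxy]
  | seq h₁ h₂ ih₁ ih₂ =>
      intro x hx i
      simp only [Stmt.vars, Set.mem_union, not_or] at hx
      rw [ih₂ x hx.2 i, ih₁ x hx.1 i]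
  | ifteTrue _ _ ih =>
      intro x hx i
      exact ih x (fun hm => hx (by simp [Stmt.vars, hm])) i
  | ifteFalse _ _ ih =>
      intro x hx i
      exact ih x (fun hm => hx (by simp [Stmt.vars, hm])) i
  | whileFalse _ => intro x _ i; rfl
  | whileTrue _ _ _ ih₁ ih₂ =>
      intro x hx i
      have hx' := hx
      simp only [Stmt.vars, Set.mem_union, not_or] at hx'
      rw [ih₂ x hx i, ih₁ x hx'.2 i]

/-- Transport an execution along `merge`: if `s` only mentions variables in
`V`, then running `s` from `merge V σ τ` yields `merge V σ' τ`. -/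
theorem BigStep.transport {V : Set Var} {τ : Valuation} {s : Stmt} {σ σ' : Valuation}
    (h : BigStep s σ σ') : s.vars ⊆ V → BigStep s (merge V σ τ) (merge V σ' τ) := by
  induction h with
  | skip => intro _; exact .skip
  | @assign x e σ =>
      intro hsub
      have hx : x ∈ V := hsub (by simp [Stmt.vars])
      have he : ∀ y ∈ e.vars, ∀ i, (merge V σ τ) y i = σ y i := by
        intro y hy i
        exact merge_mem (hsub (by simp [Stmt.vars, hy])) i
      have heval : e.eval (merge V σ τ) = e.eval σ := Expr.eval_congr e he
      have : merge V (σ.update x 0 (e.eval σ)) τ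
          = (merge V σ τ).update x 0 (e.eval (merge V σ τ)) := by
        funext y j
        by_cases hyx : y = x ∧ j = 0
        · obtain ⟨rfl, rfl⟩ := hyx
          simp [Valuation.update, merge, hx, heval]
        · simp only [Valuation.update, if_neg hyx, merge]
      rw [this]; exact .assign
  | @arrAssign x e₁ e₂ σ i hi =>
      intro hsub
      have hx : x ∈ V := hsub (by simp [Stmt.vars])
      have h₁ : e₁.eval (merge V σ τ) = e₁.eval σ := by
        refine Expr.eval_congr e₁ fun y hy i => merge_mem (hsub ?_) i
        simp [Stmt.vars, hy]
      have h₂ : e₂.eval (merge V σ τ) = e₂.eval σ := by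
        refine Expr.eval_congr e₂ fun y hy i => merge_mem (hsub ?_) i
        simp [Stmt.vars, hy]
      have : merge V (σ.update x i (e₂.eval σ)) τ
          = (merge V σ τ).update x i (e₂.eval (merge V σ τ)) := by
        funext y j
        by_cases hyx : y = x ∧ j = i
        · obtain ⟨rfl, rfl⟩ := hyx
          simp [Valuation.update, merge, hx, h₂]
        · simp only [Valuation.update, if_neg hyx, merge]
      rw [this]
      exact .arrAssign (by rw [h₁, hi])
  | seq h₁ h₂ ih₁ ih₂ =>
      intro hsub
      exact .seq (ih₁ fun y hy => hsub (by simp [Stmt.vars, hy]))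
        (ih₂ fun y hy => hsub (by simp [Stmt.vars, hy]))
  | @ifteTrue c s₁ s₂ σ σ' hc _ ih =>
      intro hsub
      have : c.eval (merge V σ τ) = c.eval σ := by
        refine Cond.eval_congr c fun y hy i => merge_mem (hsub ?_) i
        simp [Stmt.vars, hy]
      exact .ifteTrue (by rw [this, hc]) (ih fun y hy => hsub (by simp [Stmt.vars, hy]))
  | @ifteFalse c s₁ s₂ σ σ' hc _ ih =>
      intro hsub
      have : c.eval (merge V σ τ) = c.eval σ := by
        refine Cond.eval_congr c fun y hy i => merge_mem (hsub ?_) i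
        simp [Stmt.vars, hy]
      exact .ifteFalse (by rw [this, hc]) (ih fun y hy => hsub (by simp [Stmt.vars, hy]))
  | @whileFalse c s σ hc =>
      intro hsub
      have : c.eval (merge V σ τ) = c.eval σ := by
        refine Cond.eval_congr c fun y hy i => merge_mem (hsub ?_) i
        simp [Stmt.vars, hy]
      exact .whileFalse (by rw [this, hc])
  | @whileTrue c s σ σ₁ σ₂ hc _ _ ih₁ ih₂ =>
      intro hsub
      have : c.eval (merge V σ τ) = c.eval σ := by
        refine Cond.eval_congr c fun y hy i => merge_mem (hsub ?_) i
        simp [Stmt.vars, hy]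
      exact .whileTrue (by rw [this, hc])
        (ih₁ fun y hy => hsub (by simp [Stmt.vars, hy])) (ih₂ hsub)

/-- Executions of statements over disjoint variables commute. -/
theorem commute_exec {s t : Stmt} {σ σ₁ σ₂ : Valuation}
    (hd : Disjoint s.vars t.vars)
    (h₁ : BigStep s σ σ₁) (h₂ : BigStep t σ₁ σ₂) :
    ∃ τ, BigStep t σ τ ∧ BigStep s τ σ₂ := by
  set W := t.vars
  set V := s.vars
  have key : merge W σ₁ σ = σ := by
    funext x i
    by_cases hx : x ∈ W
    · rw [merge_mem hx]
      exact h₁.writes x (fun hv => (Set.disjoint_left.mp hd) hv hx) i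
    · rw [merge_not_mem hx]
  have ht : BigStep t σ (merge W σ₂ σ) := by
    have := h₂.transport (V := W) (τ := σ) le_rfl
    rwa [key] at this
  refine ⟨merge W σ₂ σ, ht, ?_⟩
  have h1' := h₁.transport (V := V) (τ := merge W σ₂ σ) le_rfl
  have e1 : merge V σ (merge W σ₂ σ) = merge W σ₂ σ := by
    funext x i
    by_cases hx : x ∈ V
    · rw [merge_mem hx, merge_not_mem (fun hw => (Set.disjoint_left.mp hd) hx hw)]
    · rw [merge_not_mem hx]
  have e2 : merge V σ₁ (merge W σ₂ σ) = σ₂ := by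
    funext x i
    by_cases hx : x ∈ V
    · rw [merge_mem hx]
      exact (h₂.writes x (fun hw => (Set.disjoint_left.mp hd) hx hw) i).symm
    · rw [merge_not_mem hx]
      by_cases hw : x ∈ W
      · rw [merge_mem hw]
      · rw [merge_not_mem hw, h₂.writes x hw i, h₁.writes x hx i]
  rw [e1, e2] at h1'
  exact h1'

/-- Semantic equivalence of statements. -/
def Equiv (s t : Stmt) : Prop := ∀ σ σ' : Valuation, BigStep s σ σ' ↔ BigStep t σ σ'

theorem Equiv.refl (s : Stmt) : Equiv s s := fun _ _ => Iff.rfl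

theorem Equiv.symm {s t : Stmt} (h : Equiv s t) : Equiv t s := fun σ σ' => (h σ σ').symm

theorem Equiv.trans {s t u : Stmt} (h₁ : Equiv s t) (h₂ : Equiv t u) : Equiv s u :=
  fun σ σ' => (h₁ σ σ').trans (h₂ σ σ')

theorem seq_inv {s t : Stmt} {σ σ' : Valuation} (h : BigStep (.seq s t) σ σ') :
    ∃ σ₁, BigStep s σ σ₁ ∧ BigStep t σ₁ σ' := by
  cases h with
  | seq h₁ h₂ => exact ⟨_, h₁, h₂⟩

theorem Equiv.seq_congr {s s' t t' : Stmt} (hs : Equiv s s') (ht : Equiv t t') :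
    Equiv (.seq s t) (.seq s' t') := by
  intro σ σ'
  constructor
  · rintro h
    obtain ⟨σ₁, h₁, h₂⟩ := seq_inv h
    exact .seq ((hs _ _).mp h₁) ((ht _ _).mp h₂)
  · rintro h
    obtain ⟨σ₁, h₁, h₂⟩ := seq_inv h
    exact .seq ((hs _ _).mpr h₁) ((ht _ _).mpr h₂)

theorem Equiv.ifte_congr {c : Cond} {s s' t t' : Stmt} (hs : Equiv s s') (ht : Equiv t t') :
    Equiv (.ifte c s t) (.ifte c s' t') := by
  intro σ σ'
  constructor
  · intro h
    cases h with
    | ifteTrue hc h => exact .ifteTrue hc ((hs _ _).mp h)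
    | ifteFalse hc h => exact .ifteFalse hc ((ht _ _).mp h)
  · intro h
    cases h with
    | ifteTrue hc h => exact .ifteTrue hc ((hs _ _).mpr h)
    | ifteFalse hc h => exact .ifteFalse hc ((ht _ _).mpr h)

theorem seq_assoc {a b c : Stmt} : Equiv (.seq (.seq a b) c) (.seq a (.seq b c)) := by
  intro σ σ'
  constructor
  · intro h
    obtain ⟨σ₂, hab, hc⟩ := seq_inv h
    obtain ⟨σ₁, ha, hb⟩ := seq_inv hab
    exact .seq ha (.seq hb hc)
  · intro h
    obtain ⟨σ₁, ha, hbc⟩ := seq_inv h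
    obtain ⟨σ₂, hb, hc⟩ := seq_inv hbc
    exact .seq (.seq ha hb) hc

theorem seq_skip_left {s : Stmt} : Equiv (.seq .skip s) s := by
  intro σ σ'
  constructor
  · intro h
    obtain ⟨σ₁, h₁, h₂⟩ := seq_inv h
    cases h₁; exact h₂
  · intro h; exact .seq .skip h

theorem seq_skip_right {s : Stmt} : Equiv (.seq s .skip) s := by
  intro σ σ'
  constructor
  · intro h
    obtain ⟨σ₁, h₁, h₂⟩ := seq_inv h
    cases h₂; exact h₁
  · intro h; exact .seq h .skip

theorem seq_comm {s t : Stmt} (hd : Disjoint s.vars t.vars) :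
    Equiv (.seq s t) (.seq t s) := by
  intro σ σ'
  constructor
  · intro h
    obtain ⟨σ₁, h₁, h₂⟩ := seq_inv h
    obtain ⟨τ, ht, hs⟩ := commute_exec hd h₁ h₂
    exact .seq ht hs
  · intro h
    obtain ⟨σ₁, h₁, h₂⟩ := seq_inv h
    obtain ⟨τ, ht, hs⟩ := commute_exec hd.symm h₁ h₂
    exact .seq ht hs

/-- Counted iterations of a while loop. -/
inductive Iter (c : Cond) (s : Stmt) : ℕ → Valuation → Valuation → Prop
  | zero {σ} : c.eval σ = false → Iter c s 0 σ σ
  | succ {n σ σ₁ σ₂} : c.eval σ = true → BigStep s σ σ₁ → Iter c s n σ₁ σ₂ →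
      Iter c s (n + 1) σ σ₂

theorem Iter.toBigStep {c : Cond} {s : Stmt} {n : ℕ} {σ σ' : Valuation}
    (h : Iter c s n σ σ') : BigStep (.whileDo c s) σ σ' := by
  induction h with
  | zero hc => exact .whileFalse hc
  | succ hc hb _ ih => exact .whileTrue hc hb ih

theorem while_iter {c : Cond} {s : Stmt} {σ σ' : Valuation}
    (h : BigStep (.whileDo c s) σ σ') : ∃ n, Iter c s n σ σ' := by
  generalize hw : Stmt.whileDo c s = w at h
  induction h with
  | skip => exact absurd hw (by simp)
  | assign => exact absurd hw (by simp)
  | arrAssign _ => exact absurd hw (by simp)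
  | seq _ _ => exact absurd hw (by simp)
  | ifteTrue _ _ => exact absurd hw (by simp)
  | ifteFalse _ _ => exact absurd hw (by simp)
  | whileFalse hc =>
      cases hw
      exact ⟨0, .zero hc⟩
  | whileTrue hc hb hrest _ ih =>
      cases hw
      obtain ⟨n, hn⟩ := ih rfl
      exact ⟨n + 1, .succ hc hb hn⟩

theorem Iter.transport {V : Set Var} {τ : Valuation} {c : Cond} {s : Stmt}
    {n : ℕ} {σ σ' : Valuation} (h : Iter c s n σ σ')
    (hc : c.vars ⊆ V) (hs : s.vars ⊆ V) :
    Iter c s n (merge V σ τ) (merge V σ' τ) := by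
  induction h with
  | @zero σ hcf =>
      refine .zero ?_
      have : c.eval (merge V σ τ) = c.eval σ :=
        Cond.eval_congr c fun y hy i => merge_mem (hc hy) i
      rw [this, hcf]
  | @succ n σ σ₁ σ₂ hct hb _ ih =>
      have : c.eval (merge V σ τ) = c.eval σ :=
        Cond.eval_congr c fun y hy i => merge_mem (hc hy) i
      exact .succ (by rw [this, hct]) (hb.transport hs) ih

theorem Iter.writes {c : Cond} {s : Stmt} {n : ℕ} {σ σ' : Valuation}
    (h : Iter c s n σ σ') : ∀ x ∉ s.vars, ∀ i, σ' x i = σ x i := by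
  induction h with
  | zero _ => intro x _ i; rfl
  | succ _ hb _ ih =>
      intro x hx i
      rw [ih x hx i, hb.writes x hx i]

@[simp] theorem seqAll_nil : seqAll [] = Stmt.skip := rfl

@[simp] theorem seqAll_cons (a : Stmt) (l : List Stmt) :
    seqAll (a :: l) = Stmt.seq a (seqAll l) := rfl

theorem seqAll_append (A B : List Stmt) :
    Equiv (seqAll (A ++ B)) (.seq (seqAll A) (seqAll B)) := by
  induction A with
  | nil => exact (seq_skip_left (s := seqAll B)).symm
  | cons a A ih =>
      simp only [List.cons_append, seqAll_cons]
      exact ((Equiv.refl a).seq_congr ih).trans seq_assoc.symm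

theorem seqAll_vars (L : List Stmt) :
    (seqAll L).vars = ⋃ s ∈ L, s.vars := by
  induction L with
  | nil => simp [seqAll, Stmt.vars]
  | cons a l ih =>
      show (Stmt.seq a (seqAll l)).vars = _
      show a.vars ∪ (seqAll l).vars = _
      rw [ih]
      simp

theorem disjoint_seqAll {t : Stmt} {L : List Stmt}
    (h : ∀ s ∈ L, Disjoint t.vars s.vars) : Disjoint t.vars (seqAll L).vars := by
  rw [seqAll_vars]
  simp only [Set.disjoint_iUnion_right]
  exact h

theorem seq_seq_swap {a b k : Stmt} (hd : Disjoint a.vars b.vars) :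
    Equiv (.seq a (.seq b k)) (.seq b (.seq a k)) := by
  refine seq_assoc.symm.trans (Equiv.trans ?_ seq_assoc)
  exact (seq_comm hd).seq_congr (Equiv.refl k)

abbrev DV : Stmt → Stmt → Prop := fun s t => Disjoint s.vars t.vars

theorem seqAll_perm {P Q : List Stmt} (hp : List.Perm P Q)
    (hd : P.Pairwise DV) : Equiv (seqAll P) (seqAll Q) := by
  induction hp with
  | nil => exact Equiv.refl _
  | cons x _ ih =>
      rw [List.pairwise_cons] at hd
      exact (Equiv.refl x).seq_congr (ih hd.2)
  | swap a b l =>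
      rw [List.pairwise_cons] at hd
      have hab : Disjoint b.vars a.vars := hd.1 a (by simp)
      simpa using seq_seq_swap (a := b) (b := a) (k := seqAll l) hab
  | trans h₁ h₂ ih₁ ih₂ =>
      refine (ih₁ hd).trans (ih₂ ?_)
      exact ((h₁.pairwise_iff fun h => h.symm).mp hd)

/-- Variables of a list of statements. -/
def stmtsVars (P : List Stmt) : Set Var := ⋃ s ∈ P, s.vars

@[simp] theorem stmtsVars_nil : stmtsVars [] = ∅ := by simp [stmtsVars]

@[simp] theorem stmtsVars_cons (a : Stmt) (P : List Stmt) :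
    stmtsVars (a :: P) = a.vars ∪ stmtsVars P := by simp [stmtsVars]

@[simp] theorem stmtsVars_append (A B : List Stmt) :
    stmtsVars (A ++ B) = stmtsVars A ∪ stmtsVars B := by
  induction A with
  | nil => simp
  | cons a A ih => simp [ih, Set.union_assoc]

theorem stmtsVars_perm {P Q : List Stmt} (h : List.Perm P Q) :
    stmtsVars P = stmtsVars Q := by
  unfold stmtsVars
  ext x
  simp only [Set.mem_iUnion]
  constructor
  · rintro ⟨s, hs, hx⟩; exact ⟨s, h.mem_iff.mp hs, hx⟩
  · rintro ⟨s, hs, hx⟩; exact ⟨s, h.mem_iff.mpr hs, hx⟩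

theorem vars_subset_stmtsVars {s : Stmt} {P : List Stmt} (h : s ∈ P) :
    s.vars ⊆ stmtsVars P := by
  intro x hx
  exact Set.mem_iUnion.mpr ⟨s, Set.mem_iUnion.mpr ⟨h, hx⟩⟩

theorem stmtsVars_map_mono {α : Type*} {f g : α → Stmt} {H : List α}
    (h : ∀ a ∈ H, (f a).vars ⊆ (g a).vars) :
    stmtsVars (H.map f) ⊆ stmtsVars (H.map g) := by
  intro x hx
  simp only [stmtsVars, Set.mem_iUnion, List.mem_map] at hx ⊢
  obtain ⟨s, ⟨a, ha, rfl⟩, hxs⟩ := hx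
  exact ⟨g a, ⟨a, ha, rfl⟩, h a ha hxs⟩

theorem loopSwap_perm (c₁ : Cond) (SB₁ S₁ Sᵢ : Stmt) (P₁ P₂ : List Stmt) :
    List.Perm (Stmt.seq (Stmt.whileDo c₁ SB₁) S₁ :: (P₁ ++ Sᵢ :: P₂))
      (Sᵢ :: (P₁ ++ P₂ ++ [Stmt.seq (Stmt.whileDo c₁ SB₁) S₁])) := by
  set L := Stmt.seq (Stmt.whileDo c₁ SB₁) S₁
  have h1 : (P₁ ++ P₂ ++ [L]).Perm (L :: (P₁ ++ P₂)) := by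
    simpa using (List.perm_middle (a := L) (l₁ := P₁ ++ P₂) (l₂ := []))
  have h2 : (L :: (P₁ ++ Sᵢ :: P₂)).Perm (L :: Sᵢ :: (P₁ ++ P₂)) :=
    List.Perm.cons _ List.perm_middle
  refine h2.trans ?_
  refine (List.Perm.swap Sᵢ L _).trans ?_
  exact List.Perm.cons _ h1.symm

theorem product_vars {P : List Stmt} {S : Stmt} (h : Product P S) :
    S.vars ⊆ stmtsVars P := by
  induction h with
  | base => simp
  | skipElim _ ih => exact ih.trans (by simp)
  | @atom A S₁ S P hA _ ih =>
      intro x hx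
      simp only [Stmt.vars, stmtsVars_cons, Set.mem_union] at hx ih ⊢
      rcases hx with hx | hx
      · tauto
      · have := ih hx
        rw [Set.mem_union] at this
        tauto
  | @iteRule c St Se S₁ S' S'' P _ _ ih₁ ih₂ =>
      intro x hx
      simp only [Stmt.vars, stmtsVars_cons, Set.mem_union] at hx ih₁ ih₂ ⊢
      rcases hx with (hx | hx) | hx
      · tauto
      · have := ih₁ hx
        simp only [Set.mem_union] at this
        tauto
      · have := ih₂ hx
        simp only [Set.mem_union] at this
        tauto
  | @loopSwap c₁ SB₁ S₁ Sᵢ S P₁ P₂ _ _ ih =>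
      refine ih.trans (le_of_eq ?_)
      exact (stmtsVars_perm (loopSwap_perm c₁ SB₁ S₁ Sᵢ P₁ P₂)).symm
  | @split H R P S' S'' _ _ hperm _ _ ih₁ ih₂ =>
      rw [show stmtsVars P = _ from stmtsVars_perm hperm]
      intro x hx
      simp only [Stmt.vars, Set.mem_union, stmtsVars_append] at hx ⊢
      have hloop : stmtsVars (H.map fun h => Stmt.whileDo h.1 h.2.1)
          ⊆ stmtsVars (H.map fun h => Stmt.seq (Stmt.whileDo h.1 h.2.1) h.2.2) :=
        stmtsVars_map_mono fun a _ => by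
          simp only [Stmt.vars]; exact Set.subset_union_left
      have hcont : stmtsVars (H.map fun h => h.2.2)
          ⊆ stmtsVars (H.map fun h => Stmt.seq (Stmt.whileDo h.1 h.2.1) h.2.2) :=
        stmtsVars_map_mono fun a _ => by
          simp only [Stmt.vars]; exact Set.subset_union_right
      rcases hx with hx | hx
      · exact Or.inl (hloop (ih₁ hx))
      · have := ih₂ hx
        rw [stmtsVars_append, Set.mem_union] at this
        rcases this with h | h
        · exact Or.inl (hcont h)
        · exact Or.inr h
  | @sync c₁ c₂ SB₁ SB₂ S S' P _ _ ihS ih =>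
      refine ih.trans ?_
      intro x hx
      have hS' : x ∈ S.vars → x ∈ SB₁.vars ∨ x ∈ SB₂.vars := fun h => by
        have := ihS h
        simpa using this
      simp only [stmtsVars_cons, Stmt.vars, Cond.vars, Set.mem_union,
        Set.mem_empty_iff_false, Stmt.vars] at hx ⊢
      tauto

/-! ### Lockstep synchronization of two loops over disjoint variables -/

section Sync

variable {c₁ c₂ : Cond} {SB₁ SB₂ S : Stmt} {V₁ V₂ : Set Var}

theorem sync_fwd (h₁c : c₁.vars ⊆ V₁) (h₁b : SB₁.vars ⊆ V₁)
    (h₂c : c₂.vars ⊆ V₂) (h₂b : SB₂.vars ⊆ V₂)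
    (hd : Disjoint V₁ V₂)
    (hS : ∀ σ σ' : Valuation, BigStep S σ σ' ↔ ∃ μ, BigStep SB₁ σ μ ∧ BigStep SB₂ μ σ') :
    ∀ n (σ σ₁ σ₂ : Valuation), Iter c₁ SB₁ n σ σ₁ →
      BigStep (.whileDo c₂ SB₂) σ₁ σ₂ →
      BigStep (.seq (.whileDo (c₁.and c₂) S)
        (.ifte c₁ (.whileDo c₁ SB₁) (.ifte c₂ (.whileDo c₂ SB₂) .skip))) σ σ₂ := by
  have hL2sub : (Stmt.whileDo c₂ SB₂).vars ⊆ V₂ := Set.union_subset h₂c h₂b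
  have hmemV : ∀ {x}, x ∈ V₁ → x ∉ V₂ := fun hx => Set.disjoint_left.mp hd hx
  have hmemV' : ∀ {x}, x ∈ V₂ → x ∉ V₁ := fun hx => Set.disjoint_right.mp hd hx
  intro n
  induction n with
  | zero =>
      intro σ σ₁ σ₂ hit h2
      cases hit with
      | zero hc₁ =>
        refine .seq (.whileFalse (by simp [Cond.eval, hc₁])) (.ifteFalse hc₁ ?_)
        by_cases hc₂ : c₂.eval σ = true
        · exact .ifteTrue hc₂ h2
        · cases h2 with
          | whileFalse h => exact .ifteFalse (by simpa using hc₂) .skip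
          | whileTrue hct _ _ => exact absurd hct hc₂
  | succ n ih =>
      intro σ σ₁ σ₂ hit h2
      cases hit with
      | @succ _ _ σmid _ hc₁ hb₁ hit' =>
        have hc₂σ₁ : c₂.eval σ₁ = c₂.eval σ := by
          refine Cond.eval_congr c₂ fun y hy i => ?_
          have hy' : y ∉ SB₁.vars := fun h => hmemV (h₁b h) (h₂c hy)
          rw [hit'.writes y hy' i, hb₁.writes y hy' i]
        by_cases hc₂ : c₂.eval σ = true
        · -- second loop still has iterations to go
          have hc₂σ₁t : c₂.eval σ₁ = true := by rw [hc₂σ₁]; exact hc₂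
          cases h2 with
          | whileFalse hcf => rw [hc₂σ₁t] at hcf; cases hcf
          | @whileTrue _ _ _ τ _ hct hb₂ h2' =>
            have e1 : merge V₂ σ₁ σmid = σmid := by
              funext x i
              by_cases hx : x ∈ V₂
              · rw [merge_mem hx]
                exact hit'.writes x (fun h => hmemV (h₁b h) hx) i
              · rw [merge_not_mem hx]
            have hb₂' : BigStep SB₂ σmid (merge V₂ τ σmid) := by
              have := hb₂.transport (V := V₂) (τ := σmid) h₂b
              rwa [e1] at this
            have hSrun : BigStep S σ (merge V₂ τ σmid) :=
              (hS σ _).mpr ⟨σmid, hb₁, hb₂'⟩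
            have e2 : merge V₁ σmid (merge V₂ τ σmid) = merge V₂ τ σmid := by
              funext x i
              by_cases hx : x ∈ V₁
              · rw [merge_mem hx, merge_not_mem (hmemV hx)]
              · rw [merge_not_mem hx]
            have hit₂ : Iter c₁ SB₁ n (merge V₂ τ σmid)
                (merge V₁ σ₁ (merge V₂ τ σmid)) := by
              have := hit'.transport (V := V₁) (τ := merge V₂ τ σmid) h₁c h₁b
              rwa [e2] at this
            have e3 : merge V₂ τ (merge V₁ σ₁ (merge V₂ τ σmid))
                = merge V₁ σ₁ (merge V₂ τ σmid) := by
              funext x i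
              by_cases hx : x ∈ V₂
              · rw [merge_mem hx, merge_not_mem (hmemV' hx), merge_mem hx]
              · rw [merge_not_mem hx]
            have e4 : merge V₂ σ₂ (merge V₁ σ₁ (merge V₂ τ σmid)) = σ₂ := by
              funext x i
              by_cases hx : x ∈ V₂
              · rw [merge_mem hx]
              · rw [merge_not_mem hx]
                have hσ₂τ : σ₂ x i = τ x i := h2'.writes x (fun h => hx (hL2sub h)) i
                have hτσ₁ : τ x i = σ₁ x i := hb₂.writes x (fun h => hx (h₂b h)) i
                by_cases hx1 : x ∈ V₁
                · rw [merge_mem hx1, hσ₂τ, hτσ₁]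
                · rw [merge_not_mem hx1, merge_not_mem hx, hσ₂τ, hτσ₁]
                  rw [hit'.writes x (fun h => hx1 (h₁b h)) i]
            have h2'' : BigStep (.whileDo c₂ SB₂)
                (merge V₁ σ₁ (merge V₂ τ σmid)) σ₂ := by
              have := h2'.transport (V := V₂)
                (τ := merge V₁ σ₁ (merge V₂ τ σmid)) hL2sub
              rwa [e3, e4] at this
            obtain ⟨ν, hW', hR'⟩ := seq_inv (ih _ _ _ hit₂ h2'')
            exact .seq (.whileTrue (by simp [Cond.eval, hc₁, hc₂]) hSrun hW') hR'
        · -- second loop is already done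
          have hc₂f : c₂.eval σ = false := by simpa using hc₂
          have hσ₂ : σ₂ = σ₁ := by
            cases h2 with
            | whileFalse _ => rfl
            | whileTrue hct _ _ =>
                rw [hc₂σ₁, hc₂f] at hct; cases hct
          subst hσ₂
          exact .seq (.whileFalse (by simp [Cond.eval, hc₂f]))
            (.ifteTrue hc₁ (.whileTrue hc₁ hb₁ hit'.toBigStep))

theorem sync_bwd (h₁c : c₁.vars ⊆ V₁) (h₁b : SB₁.vars ⊆ V₁)
    (h₂c : c₂.vars ⊆ V₂) (h₂b : SB₂.vars ⊆ V₂)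
    (hd : Disjoint V₁ V₂)
    (hS : ∀ σ σ' : Valuation, BigStep S σ σ' ↔ ∃ μ, BigStep SB₁ σ μ ∧ BigStep SB₂ μ σ') :
    ∀ n (σ ν σ₂ : Valuation), Iter (c₁.and c₂) S n σ ν →
      BigStep (.ifte c₁ (.whileDo c₁ SB₁) (.ifte c₂ (.whileDo c₂ SB₂) .skip)) ν σ₂ →
      ∃ σ₁, BigStep (.whileDo c₁ SB₁) σ σ₁ ∧ BigStep (.whileDo c₂ SB₂) σ₁ σ₂ := by
  have hL1sub : (Stmt.whileDo c₁ SB₁).vars ⊆ V₁ := Set.union_subset h₁c h₁b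
  have hL2sub : (Stmt.whileDo c₂ SB₂).vars ⊆ V₂ := Set.union_subset h₂c h₂b
  have hmemV : ∀ {x}, x ∈ V₁ → x ∉ V₂ := fun hx => Set.disjoint_left.mp hd hx
  have hmemV' : ∀ {x}, x ∈ V₂ → x ∉ V₁ := fun hx => Set.disjoint_right.mp hd hx
  intro n
  induction n with
  | zero =>
      intro σ ν σ₂ hit hR
      cases hit with
      | zero hand =>
        cases hR with
        | ifteTrue hc₁ hbr =>
          have hc₂f : c₂.eval σ = false := by
            simp only [Cond.eval, hc₁, Bool.true_and] at hand
            exact hand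
          refine ⟨σ₂, hbr, .whileFalse ?_⟩
          have : c₂.eval σ₂ = c₂.eval σ := by
            refine Cond.eval_congr c₂ fun y hy i => ?_
            exact hbr.writes y (fun h => hmemV (hL1sub h) (h₂c hy)) i
          rw [this, hc₂f]
        | ifteFalse hc₁f hinner =>
          cases hinner with
          | ifteTrue hc₂ hbr2 => exact ⟨σ, .whileFalse hc₁f, hbr2⟩
          | ifteFalse hc₂f hskip =>
            cases hskip
            exact ⟨σ, .whileFalse hc₁f, .whileFalse hc₂f⟩
  | succ n ih =>
      intro σ ν σ₂ hit hR
      cases hit with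
      | @succ _ _ μ _ hand hSstep hit' =>
        have hc₁ : c₁.eval σ = true := by
          simp only [Cond.eval, Bool.and_eq_true] at hand
          exact hand.1
        have hc₂ : c₂.eval σ = true := by
          simp only [Cond.eval, Bool.and_eq_true] at hand
          exact hand.2
        obtain ⟨ρ, hb₁, hb₂⟩ := (hS σ μ).mp hSstep
        obtain ⟨τ, hL1μ, hL2τ⟩ := ih μ ν σ₂ hit' hR
        have e5 : merge V₁ μ ρ = ρ := by
          funext x i
          by_cases hx : x ∈ V₁
          · rw [merge_mem hx]
            exact hb₂.writes x (fun h => hmemV hx (h₂b h)) i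
          · rw [merge_not_mem hx]
        have hL1ρ : BigStep (.whileDo c₁ SB₁) ρ (merge V₁ τ ρ) := by
          have := hL1μ.transport (V := V₁) (τ := ρ) hL1sub
          rwa [e5] at this
        have hL1 : BigStep (.whileDo c₁ SB₁) σ (merge V₁ τ ρ) :=
          .whileTrue hc₁ hb₁ hL1ρ
        have e6 : merge V₂ ρ (merge V₁ τ ρ) = merge V₁ τ ρ := by
          funext x i
          by_cases hx : x ∈ V₂
          · rw [merge_mem hx, merge_not_mem (hmemV' hx)]
          · rw [merge_not_mem hx]
        have hb₂' : BigStep SB₂ (merge V₁ τ ρ) (merge V₂ μ (merge V₁ τ ρ)) := by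
          have := hb₂.transport (V := V₂) (τ := merge V₁ τ ρ) h₂b
          rwa [e6] at this
        have e7 : merge V₂ τ (merge V₂ μ (merge V₁ τ ρ)) = merge V₂ μ (merge V₁ τ ρ) := by
          funext x i
          by_cases hx : x ∈ V₂
          · rw [merge_mem hx, merge_mem hx]
            exact hL1μ.writes x (fun h => hmemV' hx (hL1sub h)) i
          · rw [merge_not_mem hx]
        have e8 : merge V₂ σ₂ (merge V₂ μ (merge V₁ τ ρ)) = σ₂ := by
          funext x i
          by_cases hx : x ∈ V₂
          · rw [merge_mem hx]
          · rw [merge_not_mem hx, merge_not_mem hx]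
            have hσ₂τ : σ₂ x i = τ x i := hL2τ.writes x (fun h => hx (hL2sub h)) i
            by_cases hx1 : x ∈ V₁
            · rw [merge_mem hx1, hσ₂τ]
            · rw [merge_not_mem hx1, hσ₂τ]
              rw [hL1μ.writes x (fun h => hx1 (hL1sub h)) i]
              exact (hb₂.writes x (fun h => hx (h₂b h)) i).symm
        have hL2κ : BigStep (.whileDo c₂ SB₂) (merge V₂ μ (merge V₁ τ ρ)) σ₂ := by
          have := hL2τ.transport (V := V₂) (τ := merge V₂ μ (merge V₁ τ ρ)) hL2sub
          rwa [e7, e8] at this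
        have hc₂τ' : c₂.eval (merge V₁ τ ρ) = true := by
          have h1 : c₂.eval (merge V₁ τ ρ) = c₂.eval ρ := by
            refine Cond.eval_congr c₂ fun y hy i => ?_
            exact merge_not_mem (hmemV' (h₂c hy)) i
          have h2 : c₂.eval ρ = c₂.eval σ := by
            refine Cond.eval_congr c₂ fun y hy i => ?_
            exact hb₁.writes y (fun h => hmemV (h₁b h) (h₂c hy)) i
          rw [h1, h2, hc₂]
        exact ⟨merge V₁ τ ρ, hL1, .whileTrue hc₂τ' hb₂' hL2κ⟩

/-- Synchronizing two loops over disjoint variables. -/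
theorem sync_equiv (h₁c : c₁.vars ⊆ V₁) (h₁b : SB₁.vars ⊆ V₁)
    (h₂c : c₂.vars ⊆ V₂) (h₂b : SB₂.vars ⊆ V₂)
    (hd : Disjoint V₁ V₂)
    (hS : ∀ σ σ' : Valuation, BigStep S σ σ' ↔ ∃ μ, BigStep SB₁ σ μ ∧ BigStep SB₂ μ σ') :
    Equiv (.seq (.whileDo c₁ SB₁) (.whileDo c₂ SB₂))
      (.seq (.whileDo (c₁.and c₂) S)
        (.ifte c₁ (.whileDo c₁ SB₁) (.ifte c₂ (.whileDo c₂ SB₂) .skip))) := by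
  intro σ σ₂
  constructor
  · intro h
    obtain ⟨σ₁, h₁, h₂⟩ := seq_inv h
    obtain ⟨n, hn⟩ := while_iter h₁
    exact sync_fwd h₁c h₁b h₂c h₂b hd hS n σ σ₁ σ₂ hn h₂
  · intro h
    obtain ⟨ν, hW, hR⟩ := seq_inv h
    obtain ⟨n, hn⟩ := while_iter hW
    obtain ⟨σ₁, h₁, h₂⟩ := sync_bwd h₁c h₁b h₂c h₂b hd hS n σ ν σ₂ hn hR
    exact .seq h₁ h₂

end Sync

theorem pairwise_cons_mono {a a' : Stmt} {l : List Stmt} (hsub : a'.vars ⊆ a.vars)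
    (hd : (a :: l).Pairwise DV) : (a' :: l).Pairwise DV := by
  rw [List.pairwise_cons] at hd ⊢
  exact ⟨fun t ht => Disjoint.mono_left hsub (hd.1 t ht), hd.2⟩

/-- Pulling the leading loops of a family of loop-headed programs over
pairwise disjoint variables to the front. -/
theorem interleave {H : List (Cond × Stmt × Stmt)} {R : List Stmt}
    (hd : ((H.map fun h => Stmt.seq (Stmt.whileDo h.1 h.2.1) h.2.2) ++ R).Pairwise DV) :
    Equiv (seqAll ((H.map fun h => Stmt.seq (Stmt.whileDo h.1 h.2.1) h.2.2) ++ R))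
      (.seq (seqAll (H.map fun h => Stmt.whileDo h.1 h.2.1))
        (seqAll ((H.map fun h => h.2.2) ++ R))) := by
  induction H with
  | nil => exact (seq_skip_left (s := seqAll R)).symm
  | cons h H ih =>
      simp only [List.map_cons, List.cons_append, seqAll_cons] at hd ⊢
      rw [List.pairwise_cons] at hd
      have hT := ih hd.2
      have hdisj : Disjoint (h.2.2).vars
          (seqAll (H.map fun h => Stmt.whileDo h.1 h.2.1)).vars := by
        refine disjoint_seqAll ?_
        intro s hs
        simp only [List.mem_map] at hs
        obtain ⟨a, ha, rfl⟩ := hs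
        have hfa := hd.1 _ (by
          simp only [List.mem_append, List.mem_map]
          exact Or.inl ⟨a, ha, rfl⟩)
        refine Disjoint.mono ?_ ?_ hfa
        · show (h.2.2).vars ⊆ (Stmt.whileDo h.1 h.2.1).vars ∪ (h.2.2).vars
          exact Set.subset_union_right
        · show (Stmt.whileDo a.1 a.2.1).vars ⊆ _ ∪ (a.2.2).vars
          exact Set.subset_union_left
      refine ((Equiv.refl _).seq_congr hT).trans ?_
      refine seq_assoc.trans ?_
      refine ((Equiv.refl _).seq_congr (seq_seq_swap hdisj)).trans ?_
      exact seq_assoc.symm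

theorem product_sound_aux {P : List Stmt} {S : Stmt} (hprod : Product P S) :
    P.Pairwise DV → Equiv (seqAll P) S := by
  induction hprod with
  | base => exact fun _ => seq_skip_right
  | skipElim _ ih =>
      intro hd
      rw [List.pairwise_cons] at hd
      exact seq_skip_left.trans (ih hd.2)
  | @atom A S₁ S P hA hp ih =>
      intro hd
      have hd' : (S₁ :: P).Pairwise DV := pairwise_cons_mono
        (by show S₁.vars ⊆ A.vars ∪ S₁.vars; exact Set.subset_union_right) hd
      exact seq_assoc.trans ((Equiv.refl A).seq_congr (ih hd'))
  | @iteRule c St Se S₁ S' S'' P hp₁ hp₂ ih₁ ih₂ =>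
      intro hd
      have hd₁ : (Stmt.seq St S₁ :: P).Pairwise DV := pairwise_cons_mono
        (by
          intro x hx
          simp only [Stmt.vars, Set.mem_union] at hx ⊢
          tauto) hd
      have hd₂ : (Stmt.seq Se S₁ :: P).Pairwise DV := pairwise_cons_mono
        (by
          intro x hx
          simp only [Stmt.vars, Set.mem_union] at hx ⊢
          tauto) hd
      intro σ σ'
      constructor
      · intro h
        obtain ⟨σ₁, hif1, hK⟩ := seq_inv h
        obtain ⟨σ₀, hif, hS₁⟩ := seq_inv hif1
        cases hif with
        | ifteTrue hc hSt =>
            exact .ifteTrue hc ((ih₁ hd₁ σ σ').mp (.seq (.seq hSt hS₁) hK))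
        | ifteFalse hc hSe =>
            exact .ifteFalse hc ((ih₂ hd₂ σ σ').mp (.seq (.seq hSe hS₁) hK))
      · intro h
        cases h with
        | ifteTrue hc h' =>
            obtain ⟨σ₁, h1, hK⟩ := seq_inv ((ih₁ hd₁ σ σ').mpr h')
            obtain ⟨σ₀, hSt, hS₁⟩ := seq_inv h1
            exact .seq (.seq (.ifteTrue hc hSt) hS₁) hK
        | ifteFalse hc h' =>
            obtain ⟨σ₁, h1, hK⟩ := seq_inv ((ih₂ hd₂ σ σ').mpr h')
            obtain ⟨σ₀, hSe, hS₁⟩ := seq_inv h1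
            exact .seq (.seq (.ifteFalse hc hSe) hS₁) hK
  | @loopSwap c₁ SB₁ S₁ Sᵢ S P₁ P₂ hns hp ih =>
      intro hd
      have hperm := loopSwap_perm c₁ SB₁ S₁ Sᵢ P₁ P₂
      have hd' : (Sᵢ :: (P₁ ++ P₂ ++ [Stmt.seq (Stmt.whileDo c₁ SB₁) S₁])).Pairwise DV :=
        (hperm.pairwise_iff fun h => h.symm).mp hd
      exact (seqAll_perm hperm hd).trans (ih hd')
  | @split H R P S' S'' hne hloops hperm hp₁ hp₂ ih₁ ih₂ =>
      intro hd
      have hdQ : ((H.map fun h => Stmt.seq (Stmt.whileDo h.1 h.2.1) h.2.2) ++ R).Pairwise DV :=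
        (hperm.pairwise_iff fun h => h.symm).mp hd
      obtain ⟨hfull, hR, hcross⟩ := List.pairwise_append.mp hdQ
      have hfull' := List.pairwise_map.mp hfull
      have hdloops : (H.map fun h => Stmt.whileDo h.1 h.2.1).Pairwise DV :=
        List.pairwise_map.mpr (hfull'.imp fun {a b} h =>
          Disjoint.mono
            (show (Stmt.whileDo a.1 a.2.1).vars ⊆ _ ∪ (a.2.2).vars from
              Set.subset_union_left)
            (show (Stmt.whileDo b.1 b.2.1).vars ⊆ _ ∪ (b.2.2).vars from
              Set.subset_union_left) h)
      have hdconts : ((H.map fun h => h.2.2) ++ R).Pairwise DV := by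
        refine List.pairwise_append.mpr ⟨?_, hR, ?_⟩
        · exact List.pairwise_map.mpr (hfull'.imp fun {a b} h =>
            Disjoint.mono
              (show (a.2.2).vars ⊆ (Stmt.whileDo a.1 a.2.1).vars ∪ (a.2.2).vars from
                Set.subset_union_right)
              (show (b.2.2).vars ⊆ (Stmt.whileDo b.1 b.2.1).vars ∪ (b.2.2).vars from
                Set.subset_union_right) h)
        · intro a ha b hb
          simp only [List.mem_map] at ha
          obtain ⟨h, hH, rfl⟩ := ha
          refine Disjoint.mono_left
            (show (h.2.2).vars ⊆ (Stmt.whileDo h.1 h.2.1).vars ∪ (h.2.2).vars from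
              Set.subset_union_right) ?_
          exact hcross _ (by simp only [List.mem_map]; exact ⟨h, hH, rfl⟩) b hb
      refine (seqAll_perm hperm hd).trans ?_
      refine (interleave hdQ).trans ?_
      exact (ih₁ hdloops).seq_congr (ih₂ hdconts)
  | @sync c₁ c₂ SB₁ SB₂ S S' P hp₁ hp₂ ihS ih =>
      intro hd
      rw [List.pairwise_cons] at hd
      obtain ⟨hd1, hd'⟩ := hd
      rw [List.pairwise_cons] at hd'
      obtain ⟨hd2, hdP⟩ := hd'
      have hd12 : DV (Stmt.whileDo c₁ SB₁) (Stmt.whileDo c₂ SB₂) := hd1 _ (by simp)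
      have hdSB : ([SB₁, SB₂]).Pairwise DV := by
        refine List.pairwise_cons.mpr ⟨?_, List.pairwise_cons.mpr ⟨by simp, List.Pairwise.nil⟩⟩
        intro t ht
        simp only [List.mem_cons, List.not_mem_nil, or_false] at ht
        rw [ht]
        exact Disjoint.mono
          (show SB₁.vars ⊆ c₁.vars ∪ SB₁.vars from Set.subset_union_right)
          (show SB₂.vars ⊆ c₂.vars ∪ SB₂.vars from Set.subset_union_right) hd12
      have hEq := ihS hdSB
      have hS : ∀ σ σ' : Valuation, BigStep S σ σ' ↔
          ∃ μ, BigStep SB₁ σ μ ∧ BigStep SB₂ μ σ' := by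
        intro σ σ'
        rw [← hEq σ σ']
        constructor
        · intro h
          obtain ⟨μ, h1, h2⟩ := seq_inv h
          obtain ⟨μ', h2', hsk⟩ := seq_inv h2
          cases hsk
          exact ⟨μ, h1, h2'⟩
        · rintro ⟨μ, h1, h2⟩
          exact .seq h1 (.seq h2 .skip)
      have hSsub : ∀ x ∈ S.vars, x ∈ SB₁.vars ∨ x ∈ SB₂.vars := fun x h => by
        have := product_vars hp₁ h
        simpa using this
      have hWRsub : (Stmt.seq (Stmt.whileDo (c₁.and c₂) S)
            (Stmt.ifte c₁ (Stmt.whileDo c₁ SB₁)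
              (Stmt.ifte c₂ (Stmt.whileDo c₂ SB₂) Stmt.skip))).vars
          ⊆ (Stmt.whileDo c₁ SB₁).vars ∪ (Stmt.whileDo c₂ SB₂).vars := by
        intro x hx
        have hS' := hSsub x
        simp only [Stmt.vars, Cond.vars, Set.mem_union, Set.mem_empty_iff_false] at hx ⊢
        tauto
      have hdWR : ∀ t ∈ P, DV (Stmt.seq (Stmt.whileDo (c₁.and c₂) S)
            (Stmt.ifte c₁ (Stmt.whileDo c₁ SB₁)
              (Stmt.ifte c₂ (Stmt.whileDo c₂ SB₂) Stmt.skip))) t := by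
        intro t ht
        refine Disjoint.mono_left hWRsub ?_
        refine Set.disjoint_union_left.mpr ⟨?_, ?_⟩
        · exact hd1 t (List.mem_cons_of_mem _ ht)
        · exact hd2 t ht
      have hmain := ih (List.pairwise_cons.mpr ⟨hdWR, hdP⟩)
      refine Equiv.trans ?_ hmain
      refine seq_assoc.symm.trans ?_
      refine Equiv.seq_congr ?_ (Equiv.refl (seqAll P))
      exact sync_equiv (V₁ := c₁.vars ∪ SB₁.vars) (V₂ := c₂.vars ∪ SB₂.vars)
        Set.subset_union_left Set.subset_union_right
        Set.subset_union_left Set.subset_union_right hd12 hS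

/-- **Soundness of the n-way product construction** (Theorem 5.2): if
`S₁, ..., Sₙ` are statements over pairwise disjoint sets of variables and
`⊢ S₁ ⊛ ... ⊛ Sₙ ⇝ S` is derivable, then for all valuations `σ`, `σ'`,
`σ ⊢ S₁; ...; Sₙ ⇓ σ'` iff `σ ⊢ S ⇓ σ'`. -/
theorem product_construction_sound
    (P : List Stmt) (S : Stmt)
    (hholeFree : ∀ s ∈ P, s.HoleFree)
    (hdisj : P.Pairwise fun s t => Disjoint s.vars t.vars)
    (hprod : Product P S) :
    ∀ σ σ' : Valuation, BigStep (seqAll P) σ σ' ↔ BigStep S σ σ' :=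
  product_sound_aux hprod hdisj

end ProgMerge
end

section
/- Semantic equivalence of the synchronized-loop decomposition: let while C1 do S1 and while C2 do S2 be loops such that C1, S1 and C2, S2 mention disjoint sets of variables, let W := while (C1 ∧ C2) do (S1; S2) and R := if C1 then (while C1 do S1) else (if C2 then (while C2 do S2) else skip). Then for all valuations σ, σ', σ ⊢ (while C1 do S1); (while C2 do S2) ⇓ σ' if and only if σ ⊢ W; R ⇓ σ'. -/
namespace ProgMerge

/-! ### Auxiliary lemmas for the synchronized-loop decomposition -/

open Classical in
/-- Override: take values from `σ` on `V`, from `τ` elsewhere. -/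
noncomputable def ov (V : Set Var) (σ τ : Valuation) : Valuation :=
  fun x i => if x ∈ V then σ x i else τ x i

lemma ov_mem {V σ τ} {x : Var} (h : x ∈ V) (i : Int) : ov V σ τ x i = σ x i := by
  simp [ov, h]

lemma ov_not_mem {V σ τ} {x : Var} (h : x ∉ V) (i : Int) : ov V σ τ x i = τ x i := by
  simp [ov, h]

lemma ov_self (V : Set Var) (σ : Valuation) : ov V σ σ = σ := by
  funext x i; by_cases h : x ∈ V <;> simp [ov, h]

/-- Agreement of valuations on a set of variables. -/
def Agree (V : Set Var) (σ τ : Valuation) : Prop := ∀ x ∈ V, ∀ i, σ x i = τ x i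

lemma Expr.eval_agree : ∀ {e : Expr} {V σ τ}, Agree V σ τ → e.vars ⊆ V →
    e.eval σ = e.eval τ := by
  intro e
  induction e with
  | const n => intro V σ τ _ _; rfl
  | var x => intro V σ τ h hv; exact h x (hv (by simp [Expr.vars])) 0
  | arr x e ih =>
      intro V σ τ h hv
      have hx : x ∈ V := hv (by simp [Expr.vars])
      have he : e.vars ⊆ V := fun y hy => hv (by simp [Expr.vars]; right; exact hy)
      simp only [Expr.eval, ih h he]
      cases e.eval τ with
      | none => rfl
      | some i => exact h x hx i
  | add e₁ e₂ ih₁ ih₂ =>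
      intro V σ τ h hv
      have h1 : e₁.vars ⊆ V := fun y hy => hv (by simp [Expr.vars]; left; exact hy)
      have h2 : e₂.vars ⊆ V := fun y hy => hv (by simp [Expr.vars]; right; exact hy)
      simp only [Expr.eval, ih₁ h h1, ih₂ h h2]

lemma Cond.eval_agree : ∀ {c : Cond} {V σ τ}, Agree V σ τ → c.vars ⊆ V →
    c.eval σ = c.eval τ := by
  intro c
  induction c with
  | eq e₁ e₂ =>
      intro V σ τ h hv
      have h1 : e₁.vars ⊆ V := fun y hy => hv (by simp [Cond.vars]; left; exact hy)
      have h2 : e₂.vars ⊆ V := fun y hy => hv (by simp [Cond.vars]; right; exact hy)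
      simp only [Cond.eval, Expr.eval_agree h h1, Expr.eval_agree h h2]
  | not c ih => intro V σ τ h hv; simp only [Cond.eval, ih h hv]
  | and c₁ c₂ ih₁ ih₂ =>
      intro V σ τ h hv
      have h1 : c₁.vars ⊆ V := fun y hy => hv (by simp [Cond.vars]; left; exact hy)
      have h2 : c₂.vars ⊆ V := fun y hy => hv (by simp [Cond.vars]; right; exact hy)
      simp only [Cond.eval, ih₁ h h1, ih₂ h h2]

/-- Frame lemma: execution only modifies mentioned variables. -/
lemma BigStep.frame {s σ σ'} (h : BigStep s σ σ') :
    ∀ x ∉ s.vars, ∀ i, σ' x i = σ x i := by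
  induction h with
  | skip => intro x _ i; rfl
  | @assign y e σ =>
      intro x hx i
      have : x ≠ y := by intro h; apply hx; simp [Stmt.vars, h]
      simp [Valuation.update, this]
  | @arrAssign y e₁ e₂ σ j hj =>
      intro x hx i
      have : x ≠ y := by intro h; apply hx; simp [Stmt.vars, h]
      simp [Valuation.update, this]
  | @seq s₁ s₂ σ σ₁ σ₂ h₁ h₂ ih₁ ih₂ =>
      intro x hx i
      have hx1 : x ∉ s₁.vars := fun h => hx (by simp [Stmt.vars]; tauto)
      have hx2 : x ∉ s₂.vars := fun h => hx (by simp [Stmt.vars]; tauto)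
      rw [ih₂ x hx2, ih₁ x hx1]
  | @ifteTrue c s₁ s₂ σ σ' hc h ih =>
      intro x hx i
      exact ih x (fun h => hx (by simp [Stmt.vars]; tauto)) i
  | @ifteFalse c s₁ s₂ σ σ' hc h ih =>
      intro x hx i
      exact ih x (fun h => hx (by simp [Stmt.vars]; tauto)) i
  | whileFalse => intro x _ i; rfl
  | @whileTrue c s σ σ₁ σ₂ hc h hw ih ihw =>
      intro x hx i
      have hxs : x ∉ s.vars := fun h => hx (by simp [Stmt.vars]; tauto)
      rw [ihw x hx, ih x hxs]

lemma agree_ov_left {V W : Set Var} (hVW : W ⊆ V) (σ τ : Valuation) :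
    Agree W (ov V σ τ) σ := fun x hx i => ov_mem (hVW hx) i

/-- Locality: execution commutes with overriding outside the statement's variables. -/
lemma BigStep.locality {V : Set Var} (τ : Valuation) :
    ∀ {s σ σ'}, BigStep s σ σ' → s.vars ⊆ V → BigStep s (ov V σ τ) (ov V σ' τ) := by
  intro s σ σ' h
  induction h with
  | skip => intro _; exact BigStep.skip
  | @assign y e σ =>
      intro hv
      have hy : y ∈ V := hv (by simp [Stmt.vars])
      have he : e.vars ⊆ V := fun z hz => hv (by simp [Stmt.vars]; tauto)
      have heval : e.eval (ov V σ τ) = e.eval σ := Expr.eval_agree (agree_ov_left he σ τ) (le_refl _)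
      have : ov V (σ.update y 0 (e.eval σ)) τ = (ov V σ τ).update y 0 (e.eval (ov V σ τ)) := by
        funext z j
        by_cases hz : z = y ∧ j = 0
        · obtain ⟨rfl, rfl⟩ := hz
          simp [ov, Valuation.update, hy, heval]
        · simp [Valuation.update, hz, ov]
      rw [this]; exact BigStep.assign
  | @arrAssign y e₁ e₂ σ i hi =>
      intro hv
      have hy : y ∈ V := hv (by simp [Stmt.vars])
      have he₁ : e₁.vars ⊆ V := fun z hz => hv (by simp [Stmt.vars]; tauto)
      have he₂ : e₂.vars ⊆ V := fun z hz => hv (by simp [Stmt.vars]; tauto)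
      have hev₁ : e₁.eval (ov V σ τ) = some i := by
        rw [Expr.eval_agree (agree_ov_left he₁ σ τ) (le_refl _)]; exact hi
      have hev₂ : e₂.eval (ov V σ τ) = e₂.eval σ := Expr.eval_agree (agree_ov_left he₂ σ τ) (le_refl _)
      have : ov V (σ.update y i (e₂.eval σ)) τ = (ov V σ τ).update y i (e₂.eval (ov V σ τ)) := by
        funext z j
        by_cases hz : z = y ∧ j = i
        · obtain ⟨rfl, rfl⟩ := hz
          simp [ov, Valuation.update, hy, hev₂]
        · simp [Valuation.update, hz, ov]
      rw [this]; exact BigStep.arrAssign hev₁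
  | @seq s₁ s₂ σ σ₁ σ₂ h₁ h₂ ih₁ ih₂ =>
      intro hv
      have hv1 : s₁.vars ⊆ V := fun z hz => hv (by simp [Stmt.vars]; tauto)
      have hv2 : s₂.vars ⊆ V := fun z hz => hv (by simp [Stmt.vars]; tauto)
      exact BigStep.seq (ih₁ hv1) (ih₂ hv2)
  | @ifteTrue c s₁ s₂ σ σ' hc h ih =>
      intro hv
      have hvc : c.vars ⊆ V := fun z hz => hv (by simp [Stmt.vars]; tauto)
      have hv1 : s₁.vars ⊆ V := fun z hz => hv (by simp [Stmt.vars]; tauto)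
      exact BigStep.ifteTrue (by rw [Cond.eval_agree (agree_ov_left hvc σ τ) (le_refl _)]; exact hc) (ih hv1)
  | @ifteFalse c s₁ s₂ σ σ' hc h ih =>
      intro hv
      have hvc : c.vars ⊆ V := fun z hz => hv (by simp [Stmt.vars]; tauto)
      have hv2 : s₂.vars ⊆ V := fun z hz => hv (by simp [Stmt.vars]; tauto)
      exact BigStep.ifteFalse (by rw [Cond.eval_agree (agree_ov_left hvc σ τ) (le_refl _)]; exact hc) (ih hv2)
  | @whileFalse c s σ hc =>
      intro hv
      have hvc : c.vars ⊆ V := fun z hz => hv (by simp [Stmt.vars]; tauto)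
      exact BigStep.whileFalse (by rw [Cond.eval_agree (agree_ov_left hvc σ τ) (le_refl _)]; exact hc)
  | @whileTrue c s σ σ₁ σ₂ hc h hw ih ihw =>
      intro hv
      have hvc : c.vars ⊆ V := fun z hz => hv (by simp [Stmt.vars]; tauto)
      have hvs : s.vars ⊆ V := fun z hz => hv (by simp [Stmt.vars]; tauto)
      exact BigStep.whileTrue (by rw [Cond.eval_agree (agree_ov_left hvc σ τ) (le_refl _)]; exact hc)
        (ih hvs) (ihw hv)

/-- `Iter c S n σ σ'`: `n` successful iterations of the loop body. -/
inductive Iter_s8 (c : Cond) (S : Stmt) : ℕ → Valuation → Valuation → Prop where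
  | zero (σ) : Iter_s8 c S 0 σ σ
  | succ {n σ ρ σ'} : c.eval σ = true → BigStep S σ ρ → Iter_s8 c S n ρ σ' →
      Iter_s8 c S (n + 1) σ σ'

lemma while_of_iter {c S} : ∀ {n σ ρ}, Iter_s8 c S n σ ρ →
    ∀ {σ'}, BigStep (Stmt.whileDo c S) ρ σ' → BigStep (Stmt.whileDo c S) σ σ' := by
  intro n σ ρ h
  induction h with
  | zero => intro σ' h; exact h
  | succ hc hS _ ih => intro σ' h; exact BigStep.whileTrue hc hS (ih h)

lemma while_iter_s8 {c S} : ∀ {t σ σ'}, BigStep t σ σ' → t = Stmt.whileDo c S →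
    ∃ n, Iter_s8 c S n σ σ' ∧ c.eval σ' = false := by
  intro t σ σ' h
  induction h with
  | skip => intro h; exact absurd h (by simp)
  | assign => intro h; exact absurd h (by simp)
  | arrAssign _ => intro h; exact absurd h (by simp)
  | seq _ _ _ _ => intro h; exact absurd h (by simp)
  | ifteTrue _ _ _ => intro h; exact absurd h (by simp)
  | ifteFalse _ _ _ => intro h; exact absurd h (by simp)
  | @whileFalse c' s' σ hc =>
      intro h
      obtain ⟨rfl, rfl⟩ : c' = c ∧ s' = S := by
        injection h with h1 h2; exact ⟨h1, h2⟩
      exact ⟨0, Iter_s8.zero σ, hc⟩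
  | @whileTrue c' s' σ σ₁ σ₂ hc hS hw ih ihw =>
      intro h
      obtain ⟨rfl, rfl⟩ : c' = c ∧ s' = S := by
        injection h with h1 h2; exact ⟨h1, h2⟩
      obtain ⟨n, hn, hfin⟩ := ihw rfl
      exact ⟨n + 1, Iter_s8.succ hc hS hn, hfin⟩

lemma while_iff_iter {c S σ σ'} : BigStep (Stmt.whileDo c S) σ σ' ↔
    ∃ n, Iter_s8 c S n σ σ' ∧ c.eval σ' = false := by
  constructor
  · intro h; exact while_iter_s8 h rfl
  · rintro ⟨n, hn, hfin⟩
    exact while_of_iter hn (BigStep.whileFalse hfin)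

lemma Iter_s8.frame {c S} : ∀ {n σ σ'}, Iter_s8 c S n σ σ' →
    ∀ x ∉ S.vars, ∀ i, σ' x i = σ x i := by
  intro n σ σ' h
  induction h with
  | zero => intro x _ i; rfl
  | succ _ hS _ ih =>
      intro x hx i
      rw [ih x hx, BigStep.frame hS x hx]

lemma Iter_s8.split {c S} : ∀ (k : ℕ) {j σ σ'}, Iter_s8 c S (k + j) σ σ' →
    ∃ ρ, Iter_s8 c S k σ ρ ∧ Iter_s8 c S j ρ σ' := by
  intro k
  induction k with
  | zero => intro j σ σ' h; exact ⟨σ, Iter_s8.zero σ, by simpa using h⟩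
  | succ k ih =>
      intro j σ σ' h
      have h' : Iter_s8 c S (k + j + 1) σ σ' := by
        have : k + 1 + j = k + j + 1 := by omega
        rwa [this] at h
      cases h' with
      | succ hc hS ht =>
          obtain ⟨ρ, h1, h2⟩ := ih ht
          exact ⟨ρ, Iter_s8.succ hc hS h1, h2⟩

lemma Iter_s8.of_false {c S} {n σ σ'} (hc : c.eval σ = false) (h : Iter_s8 c S n σ σ') :
    σ' = σ := by
  cases h with
  | zero => rfl
  | succ hc' _ _ => rw [hc'] at hc; cases hc

lemma Iter_s8.locality {V : Set Var} {c S} (hc : c.vars ⊆ V) (hS : S.vars ⊆ V)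
    (τ : Valuation) : ∀ {n σ σ'}, Iter_s8 c S n σ σ' →
    Iter_s8 c S n (ov V σ τ) (ov V σ' τ) := by
  intro n σ σ' h
  induction h with
  | zero => exact Iter_s8.zero _
  | succ hcv hSs _ ih =>
      exact Iter_s8.succ
        (by rw [Cond.eval_agree (agree_ov_left hc _ τ) (le_refl _)]; exact hcv)
        (BigStep.locality τ hSs hS) ih

section Sync

variable {c₁ c₂ : Cond} {S₁ S₂ : Stmt}
variable (hdisj : Disjoint (c₁.vars ∪ S₁.vars) (c₂.vars ∪ S₂.vars))

/-- Abbreviations for the variable footprints. -/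
local notation "V₁" => c₁.vars ∪ S₁.vars
local notation "V₂" => c₂.vars ∪ S₂.vars

include hdisj

lemma mem_not_mem {x : Var} (h : x ∈ V₂) : x ∉ V₁ :=
  fun h' => Set.disjoint_left.mp hdisj h' h

omit hdisj

lemma ovsplit_eval₁ (σ₁ σ₂ : Valuation) :
    c₁.eval (ov V₁ σ₁ σ₂) = c₁.eval σ₁ :=
  Cond.eval_agree (agree_ov_left (le_refl _) σ₁ σ₂) Set.subset_union_left

include hdisj

lemma ovsplit_eval₂ (σ₁ σ₂ : Valuation) :
    c₂.eval (ov V₁ σ₁ σ₂) = c₂.eval σ₂ := by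
  exact Cond.eval_agree (V := c₂.vars ∪ S₂.vars)
    (fun x hx i => ov_not_mem (mem_not_mem hdisj hx) i) Set.subset_union_left

/-- Synchronized iteration, forward direction. -/
lemma iter_sync : ∀ {n σ₁ σ₂ ρ₁ ρ₂}, Iter_s8 c₁ S₁ n σ₁ ρ₁ → Iter_s8 c₂ S₂ n σ₂ ρ₂ →
    Iter_s8 (c₁.and c₂) (S₁.seq S₂) n (ov V₁ σ₁ σ₂) (ov V₁ ρ₁ ρ₂) := by
  intro n
  induction n with
  | zero =>
      intro σ₁ σ₂ ρ₁ ρ₂ h₁ h₂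
      cases h₁; cases h₂; exact Iter_s8.zero _
  | succ n ih =>
      intro σ₁ σ₂ ρ₁ ρ₂ h₁ h₂
      cases h₁ with
      | @succ _ _ μ₁ _ hc₁ hS₁ ht₁ =>
        cases h₂ with
        | @succ _ _ μ₂ _ hc₂ hS₂ ht₂ =>
          refine Iter_s8.succ ?_ ?_ (ih ht₁ ht₂)
          · simp [Cond.eval, ovsplit_eval₁, ovsplit_eval₂ hdisj, hc₁, hc₂]
          · -- body: S₁ then S₂ from ov V₁ σ₁ σ₂ to ov V₁ μ₁ μ₂
            refine BigStep.seq (s₁ := S₁) (σ₁ := ov V₁ μ₁ σ₂)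
              (BigStep.locality σ₂ hS₁ Set.subset_union_right) ?_
            have key : ov V₁ μ₁ σ₂ = ov V₂ σ₂ (ov V₁ μ₁ σ₂) := by
              funext x i
              by_cases hx : x ∈ V₂
              · rw [ov_mem hx, ov_not_mem (mem_not_mem hdisj hx)]
              · rw [ov_not_mem hx]
            have key2 : ov V₂ μ₂ (ov V₁ μ₁ σ₂) = ov V₁ μ₁ μ₂ := by
              funext x i
              by_cases hx : x ∈ V₂
              · rw [ov_mem hx, ov_not_mem (mem_not_mem hdisj hx)]
              · rw [ov_not_mem hx]
                by_cases hx1 : x ∈ V₁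
                · rw [ov_mem hx1, ov_mem hx1]
                · rw [ov_not_mem hx1, ov_not_mem hx1]
                  exact (BigStep.frame hS₂ x (fun h => hx (Set.mem_union_right _ h)) i).symm
            rw [key]
            rw [← key2]
            exact BigStep.locality _ hS₂ Set.subset_union_right
  done

/-- Synchronized iteration, backward direction. -/
lemma iter_unsync : ∀ {n σ₁ σ₂ τ}, Iter_s8 (c₁.and c₂) (S₁.seq S₂) n (ov V₁ σ₁ σ₂) τ →
    ∃ ρ₁ ρ₂, Iter_s8 c₁ S₁ n σ₁ ρ₁ ∧ Iter_s8 c₂ S₂ n σ₂ ρ₂ ∧ τ = ov V₁ ρ₁ ρ₂ := by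
  intro n
  induction n with
  | zero =>
      intro σ₁ σ₂ τ h
      cases h
      exact ⟨σ₁, σ₂, Iter_s8.zero _, Iter_s8.zero _, rfl⟩
  | succ n ih =>
      intro σ₁ σ₂ τ h
      cases h with
      | @succ _ _ ν _ hc hbody ht =>
        have hc₁ : c₁.eval σ₁ = true := by
          have := hc
          simp [Cond.eval, ovsplit_eval₁, ovsplit_eval₂ hdisj] at this
          exact this.1
        have hc₂ : c₂.eval σ₂ = true := by
          have := hc
          simp [Cond.eval, ovsplit_eval₁, ovsplit_eval₂ hdisj] at this
          exact this.2
        cases hbody with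
        | @seq _ _ _ μ _ hS₁ hS₂ =>
          -- pull back S₁ to σ₁
          have hS₁' : BigStep S₁ σ₁ (ov V₁ μ σ₁) := by
            have := BigStep.locality (V := V₁) σ₁ hS₁ Set.subset_union_right
            have heq : ov V₁ (ov V₁ σ₁ σ₂) σ₁ = σ₁ := by
              funext x i
              by_cases hx : x ∈ V₁
              · rw [ov_mem hx, ov_mem hx]
              · rw [ov_not_mem hx]
            rwa [heq] at this
          -- pull back S₂ to σ₂
          have hμ₂ : ov V₂ μ σ₂ = σ₂ := by
            funext x i
            by_cases hx : x ∈ V₂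
            · rw [ov_mem hx]
              rw [BigStep.frame hS₁ x
                (fun h => mem_not_mem hdisj hx (Set.mem_union_right _ h)) i]
              exact ov_not_mem (mem_not_mem hdisj hx) i
            · rw [ov_not_mem hx]
          have hS₂' : BigStep S₂ σ₂ (ov V₂ ν σ₂) := by
            have := BigStep.locality (V := V₂) σ₂ hS₂ Set.subset_union_right
            rwa [hμ₂] at this
          -- ν = ov V₁ (ov V₁ μ σ₁) (ov V₂ ν σ₂)
          have hν : ν = ov V₁ (ov V₁ μ σ₁) (ov V₂ ν σ₂) := by
            funext x i
            by_cases hx : x ∈ V₁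
            · rw [ov_mem hx, ov_mem hx]
              exact BigStep.frame hS₂ x
                (fun h => mem_not_mem hdisj (Set.mem_union_right _ h) hx) i
            · rw [ov_not_mem hx]
              by_cases hx2 : x ∈ V₂
              · rw [ov_mem hx2]
              · rw [ov_not_mem hx2]
                rw [BigStep.frame hS₂ x (fun h => hx2 (Set.mem_union_right _ h)) i]
                rw [BigStep.frame hS₁ x (fun h => hx (Set.mem_union_right _ h)) i]
                exact ov_not_mem hx i
          rw [hν] at ht
          obtain ⟨ρ₁, ρ₂, h1, h2, h3⟩ := ih ht
          exact ⟨ρ₁, ρ₂, Iter_s8.succ hc₁ hS₁' h1, Iter_s8.succ hc₂ hS₂' h2, h3⟩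

end Sync

/-- **Semantic equivalence of the synchronized-loop decomposition**: for
loops `while C₁ do S₁` and `while C₂ do S₂` over disjoint sets of
variables, with `W := while (C₁ ∧ C₂) do (S₁; S₂)` and
`R := if C₁ then (while C₁ do S₁) else (if C₂ then (while C₂ do S₂) else skip)`,
the sequential composition of the two loops is semantically equivalent
to `W; R`. -/
theorem sync_loop_decomposition
    (c₁ c₂ : Cond) (S₁ S₂ : Stmt)
    (hhf₁ : S₁.HoleFree) (hhf₂ : S₂.HoleFree)
    (hdisj : Disjoint (c₁.vars ∪ S₁.vars) (c₂.vars ∪ S₂.vars))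
    (W R : Stmt)
    (hW : W = Stmt.whileDo (c₁.and c₂) (Stmt.seq S₁ S₂))
    (hR : R = Stmt.ifte c₁ (Stmt.whileDo c₁ S₁)
        (Stmt.ifte c₂ (Stmt.whileDo c₂ S₂) Stmt.skip)) :
    ∀ σ σ' : Valuation,
      BigStep (Stmt.seq (Stmt.whileDo c₁ S₁) (Stmt.whileDo c₂ S₂)) σ σ' ↔
        BigStep (Stmt.seq W R) σ σ' := by
  subst hW hR
  intro σ σ'
  have hfr_of_iter1 : ∀ {k ρ ρ'}, Iter_s8 c₁ S₁ k ρ ρ' →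
      ∀ x ∉ c₁.vars ∪ S₁.vars, ∀ i, ρ' x i = ρ x i :=
    fun h x hx i => Iter_s8.frame h x (fun hh => hx (Set.mem_union_right _ hh)) i
  have hfr_of_iter2 : ∀ {k ρ ρ'}, Iter_s8 c₂ S₂ k ρ ρ' →
      ∀ x ∉ c₂.vars ∪ S₂.vars, ∀ i, ρ' x i = ρ x i :=
    fun h x hx i => Iter_s8.frame h x (fun hh => hx (Set.mem_union_right _ hh)) i
  constructor
  · intro h
    cases h with
    | @seq _ _ _ σ₁m _ hL1 hL2 =>
      obtain ⟨n, h1, hf1⟩ := while_iff_iter.mp hL1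
      have hσeq : ov (c₂.vars ∪ S₂.vars) σ₁m σ = σ := by
        funext x i
        by_cases hx : x ∈ c₂.vars ∪ S₂.vars
        · rw [ov_mem hx]
          exact hfr_of_iter1 h1 x (mem_not_mem hdisj hx) i
        · rw [ov_not_mem hx]
      have hL2' : BigStep (Stmt.whileDo c₂ S₂) σ (ov (c₂.vars ∪ S₂.vars) σ' σ) := by
        have := BigStep.locality (V := c₂.vars ∪ S₂.vars) σ hL2 (by simp [Stmt.vars])
        rwa [hσeq] at this
      obtain ⟨m, h2, hf2⟩ := while_iff_iter.mp hL2'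
      have hfrL2 : ∀ x ∉ c₂.vars ∪ S₂.vars, ∀ i, σ' x i = σ₁m x i :=
        fun x hx i => BigStep.frame hL2 x (by simpa [Stmt.vars] using hx) i
      have hσ' : σ' = ov (c₁.vars ∪ S₁.vars) σ₁m (ov (c₂.vars ∪ S₂.vars) σ' σ) := by
        funext x i
        by_cases hx : x ∈ c₁.vars ∪ S₁.vars
        · rw [ov_mem hx]
          exact hfrL2 x (Set.disjoint_left.mp hdisj hx) i
        · rw [ov_not_mem hx]
          by_cases hx2 : x ∈ c₂.vars ∪ S₂.vars
          · rw [ov_mem hx2]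
          · rw [ov_not_mem hx2, hfrL2 x hx2 i]
            exact hfr_of_iter1 h1 x hx i
      have hn : min n m + (n - min n m) = n := by omega
      have hm : min n m + (m - min n m) = m := by omega
      rw [← hn] at h1
      rw [← hm] at h2
      obtain ⟨ρ₁, h1k, h1r⟩ := Iter_s8.split (min n m) h1
      obtain ⟨ρ₂, h2k, h2r⟩ := Iter_s8.split (min n m) h2
      have hsync := iter_sync hdisj h1k h2k
      rw [ov_self] at hsync
      have hc₁τ : c₁.eval (ov (c₁.vars ∪ S₁.vars) ρ₁ ρ₂) = c₁.eval ρ₁ := ovsplit_eval₁ ρ₁ ρ₂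
      have hc₂τ : c₂.eval (ov (c₁.vars ∪ S₁.vars) ρ₁ ρ₂) = c₂.eval ρ₂ :=
        ovsplit_eval₂ hdisj ρ₁ ρ₂
      by_cases hb1 : c₁.eval ρ₁ = true
      · have hb2 : c₂.eval ρ₂ = false := by
          rcases Nat.le_total n m with hle | hle
          · have h0 : n - min n m = 0 := by omega
            rw [h0] at h1r
            cases h1r
            simp [hb1] at hf1
          · have h0 : m - min n m = 0 := by omega
            rw [h0] at h2r
            cases h2r
            exact hf2
        have hWrun : BigStep (Stmt.whileDo (c₁.and c₂) (S₁.seq S₂)) σ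
            (ov (c₁.vars ∪ S₁.vars) ρ₁ ρ₂) :=
          while_iff_iter.mpr ⟨min n m, hsync, by simp [Cond.eval, hc₁τ, hc₂τ, hb2]⟩
        have hρ₂ : ov (c₂.vars ∪ S₂.vars) σ' σ = ρ₂ := Iter_s8.of_false hb2 h2r
        have hL1' : BigStep (Stmt.whileDo c₁ S₁) ρ₁ σ₁m := while_iff_iter.mpr ⟨_, h1r, hf1⟩
        refine BigStep.seq hWrun (BigStep.ifteTrue (by rw [hc₁τ, hb1]) ?_)
        rw [hσ', hρ₂]
        exact BigStep.locality (V := c₁.vars ∪ S₁.vars) ρ₂ hL1' (by simp [Stmt.vars])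
      · have hb1' : c₁.eval ρ₁ = false := by simpa using hb1
        have hWrun : BigStep (Stmt.whileDo (c₁.and c₂) (S₁.seq S₂)) σ
            (ov (c₁.vars ∪ S₁.vars) ρ₁ ρ₂) :=
          while_iff_iter.mpr ⟨min n m, hsync, by simp [Cond.eval, hc₁τ, hb1']⟩
        have hρ₁ : σ₁m = ρ₁ := Iter_s8.of_false hb1' h1r
        refine BigStep.seq hWrun (BigStep.ifteFalse (by rw [hc₁τ]; exact hb1') ?_)
        by_cases hb2 : c₂.eval ρ₂ = true
        · refine BigStep.ifteTrue (by rw [hc₂τ]; exact hb2) ?_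
          have hL2'' : BigStep (Stmt.whileDo c₂ S₂) ρ₂ (ov (c₂.vars ∪ S₂.vars) σ' σ) :=
            while_iff_iter.mpr ⟨_, h2r, hf2⟩
          have hkey : ov (c₂.vars ∪ S₂.vars) ρ₂ (ov (c₁.vars ∪ S₁.vars) ρ₁ ρ₂) =
              ov (c₁.vars ∪ S₁.vars) ρ₁ ρ₂ := by
            funext x i
            by_cases hx : x ∈ c₂.vars ∪ S₂.vars
            · rw [ov_mem hx, ov_not_mem (mem_not_mem hdisj hx)]
            · rw [ov_not_mem hx]
          have hstep := BigStep.locality (V := c₂.vars ∪ S₂.vars)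
            (ov (c₁.vars ∪ S₁.vars) ρ₁ ρ₂) hL2'' (by simp [Stmt.vars])
          rw [hkey] at hstep
          have hfin : ov (c₂.vars ∪ S₂.vars) (ov (c₂.vars ∪ S₂.vars) σ' σ)
              (ov (c₁.vars ∪ S₁.vars) ρ₁ ρ₂) = σ' := by
            funext x i
            by_cases hx : x ∈ c₂.vars ∪ S₂.vars
            · rw [ov_mem hx, ov_mem hx]
            · rw [ov_not_mem hx]
              conv_rhs => rw [hσ']
              by_cases hx1 : x ∈ c₁.vars ∪ S₁.vars
              · rw [ov_mem hx1, ov_mem hx1, hρ₁]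
              · rw [ov_not_mem hx1, ov_not_mem hx1, ov_not_mem hx]
                exact hfr_of_iter2 h2k x hx i
          rw [← hfin]
          exact hstep
        · have hb2' : c₂.eval ρ₂ = false := by simpa using hb2
          have hρ₂ : ov (c₂.vars ∪ S₂.vars) σ' σ = ρ₂ := Iter_s8.of_false hb2' h2r
          refine BigStep.ifteFalse (by rw [hc₂τ]; exact hb2') ?_
          have hστ : σ' = ov (c₁.vars ∪ S₁.vars) ρ₁ ρ₂ := by
            rw [hσ', hρ₂, hρ₁]
          rw [hστ]
          exact BigStep.skip
  · intro h
    cases h with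
    | @seq _ _ _ τ _ hWr hRr =>
      obtain ⟨k, hk, hfW⟩ := while_iff_iter.mp hWr
      have hk' : Iter_s8 (c₁.and c₂) (S₁.seq S₂) k (ov (c₁.vars ∪ S₁.vars) σ σ) τ := by
        rwa [ov_self]
      obtain ⟨ρ₁, ρ₂, h1, h2, rfl⟩ := iter_unsync hdisj hk'
      have hc₁τ : c₁.eval (ov (c₁.vars ∪ S₁.vars) ρ₁ ρ₂) = c₁.eval ρ₁ := ovsplit_eval₁ ρ₁ ρ₂
      have hc₂τ : c₂.eval (ov (c₁.vars ∪ S₁.vars) ρ₁ ρ₂) = c₂.eval ρ₂ :=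
        ovsplit_eval₂ hdisj ρ₁ ρ₂
      cases hRr with
      | ifteTrue hc hloop1 =>
        have hb1 : c₁.eval ρ₁ = true := by rwa [hc₁τ] at hc
        have hb2 : c₂.eval ρ₂ = false := by
          simp [Cond.eval, hc₁τ, hc₂τ, hb1] at hfW
          exact hfW
        have hL2 : BigStep (Stmt.whileDo c₂ S₂) σ ρ₂ := while_iff_iter.mpr ⟨k, h2, hb2⟩
        have hfrl1 : ∀ x ∉ c₁.vars ∪ S₁.vars, ∀ i,
            σ' x i = ov (c₁.vars ∪ S₁.vars) ρ₁ ρ₂ x i :=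
          fun x hx i => BigStep.frame hloop1 x (by simpa [Stmt.vars] using hx) i
        have heq1 : ov (c₁.vars ∪ S₁.vars) (ov (c₁.vars ∪ S₁.vars) ρ₁ ρ₂) σ = ρ₁ := by
          funext x i
          by_cases hx : x ∈ c₁.vars ∪ S₁.vars
          · rw [ov_mem hx, ov_mem hx]
          · rw [ov_not_mem hx]
            exact (hfr_of_iter1 h1 x hx i).symm
        have hl1 := BigStep.locality (V := c₁.vars ∪ S₁.vars) σ hloop1 (by simp [Stmt.vars])
        rw [heq1] at hl1
        have hL1 : BigStep (Stmt.whileDo c₁ S₁) σ (ov (c₁.vars ∪ S₁.vars) σ' σ) :=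
          while_of_iter h1 hl1
        have heq2 : ov (c₂.vars ∪ S₂.vars) σ (ov (c₁.vars ∪ S₁.vars) σ' σ) =
            ov (c₁.vars ∪ S₁.vars) σ' σ := by
          funext x i
          by_cases hx : x ∈ c₂.vars ∪ S₂.vars
          · rw [ov_mem hx, ov_not_mem (mem_not_mem hdisj hx)]
          · rw [ov_not_mem hx]
        have hl2 := BigStep.locality (V := c₂.vars ∪ S₂.vars)
          (ov (c₁.vars ∪ S₁.vars) σ' σ) hL2 (by simp [Stmt.vars])
        rw [heq2] at hl2
        have heq3 : ov (c₂.vars ∪ S₂.vars) ρ₂ (ov (c₁.vars ∪ S₁.vars) σ' σ) = σ' := by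
          funext x i
          by_cases hx : x ∈ c₂.vars ∪ S₂.vars
          · rw [ov_mem hx, hfrl1 x (mem_not_mem hdisj hx) i,
                ov_not_mem (mem_not_mem hdisj hx)]
          · rw [ov_not_mem hx]
            by_cases hx1 : x ∈ c₁.vars ∪ S₁.vars
            · rw [ov_mem hx1]
            · rw [ov_not_mem hx1, hfrl1 x hx1 i, ov_not_mem hx1]
              exact (hfr_of_iter2 h2 x hx i).symm
        rw [heq3] at hl2
        exact BigStep.seq hL1 hl2
      | ifteFalse hc hinner =>
        have hb1 : c₁.eval ρ₁ = false := by rwa [hc₁τ] at hc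
        have hL1 : BigStep (Stmt.whileDo c₁ S₁) σ ρ₁ := while_iff_iter.mpr ⟨k, h1, hb1⟩
        have heq5 : ov (c₂.vars ∪ S₂.vars) σ ρ₁ = ρ₁ := by
          funext x i
          by_cases hx : x ∈ c₂.vars ∪ S₂.vars
          · rw [ov_mem hx]
            exact (hfr_of_iter1 h1 x (mem_not_mem hdisj hx) i).symm
          · rw [ov_not_mem hx]
        cases hinner with
        | ifteTrue hc₂ hloop2 =>
          have hb2 : c₂.eval ρ₂ = true := by rwa [hc₂τ] at hc₂
          have hfrl2 : ∀ x ∉ c₂.vars ∪ S₂.vars, ∀ i,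
              σ' x i = ov (c₁.vars ∪ S₁.vars) ρ₁ ρ₂ x i :=
            fun x hx i => BigStep.frame hloop2 x (by simpa [Stmt.vars] using hx) i
          have heq4 : ov (c₂.vars ∪ S₂.vars) (ov (c₁.vars ∪ S₁.vars) ρ₁ ρ₂) σ = ρ₂ := by
            funext x i
            by_cases hx : x ∈ c₂.vars ∪ S₂.vars
            · rw [ov_mem hx, ov_not_mem (mem_not_mem hdisj hx)]
            · rw [ov_not_mem hx]
              exact (hfr_of_iter2 h2 x hx i).symm
          have hl2 := BigStep.locality (V := c₂.vars ∪ S₂.vars) σ hloop2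
            (by simp [Stmt.vars])
          rw [heq4] at hl2
          have hL2 : BigStep (Stmt.whileDo c₂ S₂) σ (ov (c₂.vars ∪ S₂.vars) σ' σ) :=
            while_of_iter h2 hl2
          have hl2' := BigStep.locality (V := c₂.vars ∪ S₂.vars) ρ₁ hL2
            (by simp [Stmt.vars])
          rw [heq5] at hl2'
          have heq6 : ov (c₂.vars ∪ S₂.vars) (ov (c₂.vars ∪ S₂.vars) σ' σ) ρ₁ = σ' := by
            funext x i
            by_cases hx : x ∈ c₂.vars ∪ S₂.vars
            · rw [ov_mem hx, ov_mem hx]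
            · rw [ov_not_mem hx, hfrl2 x hx i]
              by_cases hx1 : x ∈ c₁.vars ∪ S₁.vars
              · rw [ov_mem hx1]
              · rw [ov_not_mem hx1]
                rw [hfr_of_iter2 h2 x hx i]
                exact hfr_of_iter1 h1 x hx1 i
          rw [heq6] at hl2'
          exact BigStep.seq hL1 hl2'
        | ifteFalse hc₂ hskip =>
          cases hskip
          have hb2 : c₂.eval ρ₂ = false := by rwa [hc₂τ] at hc₂
          have hL2σ : BigStep (Stmt.whileDo c₂ S₂) σ ρ₂ := while_iff_iter.mpr ⟨k, h2, hb2⟩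
          have hl2 := BigStep.locality (V := c₂.vars ∪ S₂.vars) ρ₁ hL2σ
            (by simp [Stmt.vars])
          rw [heq5] at hl2
          have heq7 : ov (c₂.vars ∪ S₂.vars) ρ₂ ρ₁ = ov (c₁.vars ∪ S₁.vars) ρ₁ ρ₂ := by
            funext x i
            by_cases hx : x ∈ c₂.vars ∪ S₂.vars
            · rw [ov_mem hx, ov_not_mem (mem_not_mem hdisj hx)]
            · rw [ov_not_mem hx]
              by_cases hx1 : x ∈ c₁.vars ∪ S₁.vars
              · rw [ov_mem hx1]
              · rw [ov_not_mem hx1, hfr_of_iter1 h1 x hx1 i]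
                exact (hfr_of_iter2 h2 x hx i).symm
          rw [heq7] at hl2
          exact BigStep.seq hL1 hl2

end ProgMerge
end
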